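/- arXiv:2307.00607 — 3 statements merged into one kernel-verified Lean document; each statement's English description precedes it below -/
import Mathlib

section
/- Let P : [t0,∞) → End(ℂ^{d×d}) be continuously differentiable with P(t)² = P(t) for all t, let Q(t) = I − P(t), and let U : [t0,∞) → End(ℂ^{d×d}) satisfy dU/dt = λ L(t) U(t), U(t0) = I, for continuous L. Suppose at time t the superoperator P(t)U(t)P(t), restricted appropriately, admits a pseudo-inverse (P(t)U(t)P(t))^{(-1)} with (P(t)U(t)P(t))^{(-1)}(P(t)U(t)P(t)) = P(t). Then the projected propagator satisfies d/dt (P(t)U(t)) = K(t) P(t) U(t) + I(t) Q(t), where K(t) = (Ṗ(t)U(t)P(t) + P(t)U̇(t)P(t))(P(t)U(t)P(t))^{(-1)} and I(t) = Ṗ(t)U(t)Q(t) + P(t)U̇(t)Q(t) − K(t)P(t)U(t)Q(t). -/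
noncomputable section
open Matrix

attribute [local instance] Matrix.frobeniusNormedAddCommGroup Matrix.frobeniusNormedSpace

instance stmt0_continuousSMul_real {d : ℕ} :
    ContinuousSMul ℝ (Matrix (Fin d) (Fin d) ℂ →L[ℂ] Matrix (Fin d) (Fin d) ℂ) :=
  IsScalarTower.continuousSMul ℂ

/-!
By the product rule, `d/dt (P U) = Ṗ U + P U̇ =: A`. Split `A = A P + A Q`. The pseudo-inverse
identity gives `K P U P = A P (P U P)⁻¹ (P U P) = A P`, and since `Q` is idempotent,
`I Q = A Q - K P U Q`; hence `K P U + I Q = K P U P + A Q = A`.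
-/

/-- For matrices with the local Frobenius norm, instance search does not find the real normed
algebra structure that `HasDerivWithinAt.mul` needs, so the product rule is stated for an
arbitrary complex normed space. -/
theorem HasDerivWithinAt.complex_clm_comp {E : Type*} [NormedAddCommGroup E] [NormedSpace ℂ E]
    {A B : ℝ → E →L[ℂ] E} {A' B' : E →L[ℂ] E} {s : Set ℝ} {t : ℝ}
    (hA : HasDerivWithinAt A A' s t) (hB : HasDerivWithinAt B B' s t) :
    HasDerivWithinAt (fun x => (A x).comp (B x)) (A'.comp (B t) + (A t).comp B') s t :=
  hA.mul hB

theorem IsIdempotentElem.mul_add_mul_one_sub_eq {R : Type*} [Ring R] {p u pinv a k i : R}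
    (hp : IsIdempotentElem p) (hpinv : pinv * (p * (u * p)) = p) (hk : k = a * p * pinv)
    (hi : i = a * (1 - p) - k * (p * (u * (1 - p)))) :
    k * (p * u) + i * (1 - p) = a := by
  have hq : IsIdempotentElem (1 - p) := hp.one_sub
  calc k * (p * u) + i * (1 - p) = k * (p * (u * p)) + a * (1 - p) := by
        rw [hi, sub_mul, mul_assoc a, hq.eq, mul_assoc k, mul_assoc p, mul_assoc u, hq.eq]
        noncomm_ring
    _ = a * p + a * (1 - p) := by rw [hk, mul_assoc _ pinv, hpinv, mul_assoc, hp.eq]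
    _ = a := by noncomm_ring

theorem stmt_0_general {d : ℕ} (t0 lam : ℝ)
    (L P P' U : ℝ → (Matrix (Fin d) (Fin d) ℂ →L[ℂ] Matrix (Fin d) (Fin d) ℂ))
    (hP : ∀ s ∈ Set.Ici t0, HasDerivWithinAt P (P' s) (Set.Ici t0) s)
    (hidem : ∀ s ∈ Set.Ici t0, (P s).comp (P s) = P s)
    (hU : ∀ s ∈ Set.Ici t0,
      HasDerivWithinAt U (lam • ((L s).comp (U s))) (Set.Ici t0) s)
    (t : ℝ) (ht : t ∈ Set.Ici t0)
    (Q : ℝ → (Matrix (Fin d) (Fin d) ℂ →L[ℂ] Matrix (Fin d) (Fin d) ℂ))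
    (hQ : ∀ s, Q s = ContinuousLinearMap.id ℂ (Matrix (Fin d) (Fin d) ℂ) - P s)
    -- the time derivative of the propagator at time `t`
    (Udot : Matrix (Fin d) (Fin d) ℂ →L[ℂ] Matrix (Fin d) (Fin d) ℂ)
    (hUdot : Udot = lam • ((L t).comp (U t)))
    -- pseudo-inverse of `P(t)U(t)P(t)`
    (Pinv : Matrix (Fin d) (Fin d) ℂ →L[ℂ] Matrix (Fin d) (Fin d) ℂ)
    (hPinv : Pinv.comp ((P t).comp ((U t).comp (P t))) = P t)
    (K Iop : Matrix (Fin d) (Fin d) ℂ →L[ℂ] Matrix (Fin d) (Fin d) ℂ)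
    (hK : K = ((P' t).comp ((U t).comp (P t))
      + (P t).comp (Udot.comp (P t))).comp Pinv)
    (hI : Iop = (P' t).comp ((U t).comp (Q t)) + (P t).comp (Udot.comp (Q t))
      - K.comp ((P t).comp ((U t).comp (Q t)))) :
    HasDerivWithinAt (fun s => (P s).comp (U s))
      (K.comp ((P t).comp (U t)) + Iop.comp (Q t)) (Set.Ici t0) t := by
  have hQt : Q t = 1 - P t := hQ t
  simp only [← ContinuousLinearMap.mul_def, hQt] at hK hI hPinv ⊢
  have hK' : K = (P' t * U t + P t * Udot) * P t * Pinv := by rw [hK]; noncomm_ring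
  have hI' : Iop = (P' t * U t + P t * Udot) * (1 - P t) - K * (P t * (U t * (1 - P t))) := by
    rw [hI]; noncomm_ring
  rw [IsIdempotentElem.mul_add_mul_one_sub_eq (hidem t ht) hPinv hK' hI', hUdot]
  exact (hP t ht).complex_clm_comp (hU t ht)

/-- time-local master equation for the projected propagator with a time-dependent
projector.  `P` is a continuously differentiable family of idempotent superoperators on
`[t0,∞)`, `Q = I - P`, `U` is the propagator of `dU/dt = λ L(t) U(t)`, `U t0 = I`, and at the
fixed time `t` the superoperator `P(t)U(t)P(t)` admits a pseudo-inverse `Pinv` with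
`Pinv ∘ (P(t)U(t)P(t)) = P(t)`.  Then `d/dt (P(t)U(t)) = K(t) P(t) U(t) + I(t) Q(t)` with
`K(t) = (Ṗ(t)U(t)P(t) + P(t)U̇(t)P(t)) (P(t)U(t)P(t))⁻¹` and
`I(t) = Ṗ(t)U(t)Q(t) + P(t)U̇(t)Q(t) − K(t)P(t)U(t)Q(t)`. -/
theorem stmt_0 {d : ℕ} (t0 lam : ℝ)
    (L P P' U : ℝ → (Matrix (Fin d) (Fin d) ℂ →L[ℂ] Matrix (Fin d) (Fin d) ℂ))
    (hL : Continuous L)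
    (hP : ∀ s ∈ Set.Ici t0, HasDerivWithinAt P (P' s) (Set.Ici t0) s)
    (hP' : ContinuousOn P' (Set.Ici t0))
    (hidem : ∀ s ∈ Set.Ici t0, (P s).comp (P s) = P s)
    (hU : ∀ s ∈ Set.Ici t0,
      HasDerivWithinAt U (lam • ((L s).comp (U s))) (Set.Ici t0) s)
    (hU0 : U t0 = ContinuousLinearMap.id ℂ (Matrix (Fin d) (Fin d) ℂ))
    (t : ℝ) (ht : t ∈ Set.Ici t0)
    (Q : ℝ → (Matrix (Fin d) (Fin d) ℂ →L[ℂ] Matrix (Fin d) (Fin d) ℂ))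
    (hQ : ∀ s, Q s = ContinuousLinearMap.id ℂ (Matrix (Fin d) (Fin d) ℂ) - P s)
    -- the time derivative of the propagator at time `t`
    (Udot : Matrix (Fin d) (Fin d) ℂ →L[ℂ] Matrix (Fin d) (Fin d) ℂ)
    (hUdot : Udot = lam • ((L t).comp (U t)))
    -- pseudo-inverse of `P(t)U(t)P(t)`
    (Pinv : Matrix (Fin d) (Fin d) ℂ →L[ℂ] Matrix (Fin d) (Fin d) ℂ)
    (hPinv : Pinv.comp ((P t).comp ((U t).comp (P t))) = P t)
    (K Iop : Matrix (Fin d) (Fin d) ℂ →L[ℂ] Matrix (Fin d) (Fin d) ℂ)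
    (hK : K = ((P' t).comp ((U t).comp (P t))
      + (P t).comp (Udot.comp (P t))).comp Pinv)
    (hI : Iop = (P' t).comp ((U t).comp (Q t)) + (P t).comp (Udot.comp (Q t))
      - K.comp ((P t).comp ((U t).comp (Q t)))) :
    HasDerivWithinAt (fun s => (P s).comp (U s))
      (K.comp ((P t).comp (U t)) + Iop.comp (Q t)) (Set.Ici t0) t :=
  stmt_0_general t0 lam L P P' U hP hidem hU t ht Q hQ Udot hUdot Pinv hPinv K Iop hK hI
end
end

section
/- Let ρ(t) be a continuously differentiable family of unit-trace matrices and define the time-dependent Kawasaki–Gunton projector P_KG(t) = P_KG,NL(ρ(t)). Then the Robertson condition holds: Ṗ_KG(t) ρ(t) = 0 for all t, i.e., d/dt(P_KG(t) ρ(t)) = P_KG(t) (d/dt ρ(t)). -/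
noncomputable section
open Matrix

attribute [local instance] Matrix.frobeniusNormedAddCommGroup Matrix.frobeniusNormedSpace

/-- Robertson condition for the time-dependent Kawasaki–Gunton projector:
along a differentiable trajectory `ρ(t)` of unit-trace matrices,
`d/dt (P_KG(t) ρ(t)) = P_KG(t) (dρ(t)/dt)`, where `P_KG(t) = P_KG,NL(ρ(t))` is the
parametric Kawasaki–Gunton superoperator evaluated at `E(t) = Tr(P⃗ ρ(t))`. -/
theorem stmt_6 {d M : ℕ}
    (P : Fin M → Matrix (Fin d) (Fin d) ℂ)
    (hHerm : ∀ m, (P m).IsHermitian)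
    (Ω : Set (Fin M → ℝ)) (hΩ : IsOpen Ω)
    (ρans : (Fin M → ℝ) → Matrix (Fin d) (Fin d) ℂ)
    (ρd : (Fin M → ℝ) → ((Fin M → ℝ) →L[ℝ] Matrix (Fin d) (Fin d) ℂ))
    (hdiff : ∀ E ∈ Ω, HasFDerivAt ρans (ρd E) E)
    (htr : ∀ E ∈ Ω, (ρans E).trace = 1)
    (hcons : ∀ E ∈ Ω, ∀ m, (P m * ρans E).trace = (E m : ℂ))
    (PKG : (Fin M → ℝ) → Matrix (Fin d) (Fin d) ℂ → Matrix (Fin d) (Fin d) ℂ)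
    (hPKG : ∀ E X, PKG E X = X.trace • ρans E
      + ∑ m, ((X * P m).trace - X.trace * (E m : ℂ)) • (ρd E) (Pi.single m 1))
    -- a differentiable trajectory of unit-trace matrices
    (ρ : ℝ → Matrix (Fin d) (Fin d) ℂ) (ρ' : ℝ → Matrix (Fin d) (Fin d) ℂ)
    (hρ : ∀ t, HasDerivAt ρ (ρ' t) t)
    (hρtr : ∀ t, (ρ t).trace = 1)
    -- the means of the relevant observables along the trajectory
    (Et : ℝ → (Fin M → ℝ))
    (hEt : ∀ t m, (P m * ρ t).trace = (Et t m : ℂ))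
    (hEtΩ : ∀ t, Et t ∈ Ω) :
    ∀ t, HasDerivAt (fun s => PKG (Et s) (ρ s)) (PKG (Et t) (ρ' t)) t := by
  intro t
  classical
  have hfun : (fun s => PKG (Et s) (ρ s)) = fun s => ρans (Et s) := by
    funext s
    rw [hPKG]
    have h2 : ∀ m, (ρ s * P m).trace = (Et s m : ℂ) := fun m => by
      rw [Matrix.trace_mul_comm]; exact hEt s m
    simp [hρtr s, h2]
  rw [hfun]
  let L : Fin M → (Matrix (Fin d) (Fin d) ℂ →L[ℝ] ℂ) := fun m =>
    LinearMap.toContinuousLinearMap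
      (((Matrix.traceLinearMap (Fin d) ℂ ℂ).comp (LinearMap.mulLeft ℂ (P m))).restrictScalars ℝ)
  have hg : ∀ m, HasDerivAt (fun s => (P m * ρ s).trace) ((P m * ρ' t).trace) t := fun m =>
    (L m).hasFDerivAt.comp_hasDerivAt t (hρ t)
  have him : ∀ m, ((P m * ρ' t).trace).im = 0 := by
    intro m
    have h1 : HasDerivAt (fun s => ((P m * ρ s).trace).im) (((P m * ρ' t).trace).im) t :=
      Complex.imCLM.hasFDerivAt.comp_hasDerivAt t (hg m)
    have h2 : (fun s => ((P m * ρ s).trace).im) = fun _ => (0 : ℝ) := by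
      funext s; rw [hEt s m]; simp
    rw [h2] at h1
    exact h1.unique (hasDerivAt_const t 0)
  set E' : Fin M → ℝ := fun m => ((P m * ρ' t).trace).re with hE'
  have hEt' : HasDerivAt Et E' t := by
    rw [hasDerivAt_pi]
    intro m
    have h1 : HasDerivAt (fun s => ((P m * ρ s).trace).re) (((P m * ρ' t).trace).re) t :=
      Complex.reCLM.hasFDerivAt.comp_hasDerivAt t (hg m)
    have h2 : (fun s => ((P m * ρ s).trace).re) = fun s => Et s m := by
      funext s; rw [hEt s m]; simp
    rw [h2] at h1
    exact h1
  have hmain : HasDerivAt (fun s => ρans (Et s)) ((ρd (Et t)) E') t :=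
    (hdiff (Et t) (hEtΩ t)).comp_hasDerivAt t hEt'
  have htr0 : (ρ' t).trace = 0 := by
    have h1 : HasDerivAt (fun s => (ρ s).trace) ((ρ' t).trace) t :=
      (LinearMap.toContinuousLinearMap
        ((Matrix.traceLinearMap (Fin d) ℂ ℂ).restrictScalars ℝ)).hasFDerivAt.comp_hasDerivAt
        t (hρ t)
    have h2 : (fun s => (ρ s).trace) = fun _ => (1 : ℂ) := funext hρtr
    rw [h2] at h1
    exact h1.unique (hasDerivAt_const t 1)
  have hval : ∀ m, (ρ' t * P m).trace = ((E' m : ℝ) : ℂ) := by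
    intro m
    rw [Matrix.trace_mul_comm]
    exact Complex.ext (by simp [hE']) (by simp [him m])
  have hsum : (ρd (Et t)) E' = PKG (Et t) (ρ' t) := by
    rw [hPKG, htr0]
    simp only [zero_smul, zero_add, zero_mul, sub_zero, hval]
    have hE'eq : E' = ∑ m, E' m • (Pi.single m 1 : Fin M → ℝ) := by
      funext j
      simp [Finset.sum_apply, Pi.single_apply]
    conv_lhs => rw [hE'eq]
    rw [map_sum]
    refine Finset.sum_congr rfl fun m _ => ?_
    rw [(ρd (Et t)).map_smul]
    simp [Complex.coe_smul]
  rw [← hsum]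
  exact hmain
end
end

section
/- Let γ < 0, and for λ ≠ 0 let Ẽ_z^λ solve dẼ_z/dt = 2(Ω²/γ)(1 − e^{(γ/2)(t/λ²)}) Ẽ_z(t) + 2(γ_0Ω²/γ²)(1 − e^{(γ/2)(t/λ²)})² with Ẽ_z^λ(0) = E_0; let ε_z solve the limit equation dε_z/dt = 2(Ω²/γ) ε_z(t) + 2(γ_0Ω²/γ²) with ε_z(0) = E_0. Then for every fixed t > 0, Ẽ_z^λ(t) → ε_z(t) as λ → 0. -/
open Real Filter Topology Set

/-!
Write `f = 1 - e^{cs}` with `c = γ / (2λ²) < 0`. The difference `d = Ẽ_z - ε_z` solves the linear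
equation `d' = a f d + r` with `a = 2Ω²/γ`, where the forcing `r` (the difference of the two vector
fields along `ε_z`) is `O(e^{cs})`, hence has integral `O(1/|c|) = O(λ²)` over `[0, t]`, although it
is not small pointwise near `s = 0`. Applying Grönwall's inequality to `d - ∫₀ˢ r`, whose
derivative `a f (d - ∫ r + ∫ r)` is controlled by `|a| |d - ∫ r| + |a| O(λ²)`, gives
`|d(t)| = O(λ²)` for fixed `t`.
-/

theorem abs_integral_le_of_abs_le_mul_exp {r : ℝ → ℝ} {C c s : ℝ} (hc : c < 0) (hs : 0 ≤ s)
    (hr : IntervalIntegrable r MeasureTheory.volume 0 s)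
    (hbound : ∀ u ∈ Icc 0 s, |r u| ≤ C * exp (c * u)) :
    |∫ u in 0..s, r u| ≤ C / -c := by
  have hC : 0 ≤ C := by simpa using (abs_nonneg _).trans (hbound 0 ⟨le_rfl, hs⟩)
  have hexp : ∫ u in 0..s, C * exp (c * u) = C * ((1 - exp (c * s)) / -c) := by
    rw [intervalIntegral.integral_const_mul,
      intervalIntegral.integral_comp_mul_left (fun x => exp x) hc.ne, integral_exp]
    field_simp
    simp only [mul_zero, exp_zero]
    ring
  calc |∫ u in 0..s, r u| ≤ ∫ u in 0..s, |r u| := intervalIntegral.abs_integral_le_integral_abs hs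
    _ ≤ ∫ u in 0..s, C * exp (c * u) :=
      intervalIntegral.integral_mono_on hs hr.abs
        ((by fun_prop : Continuous fun u => C * exp (c * u)).intervalIntegrable 0 s) hbound
    _ = C * ((1 - exp (c * s)) / -c) := hexp
    _ ≤ C * (1 / -c) := by
      gcongr
      · linarith
      · linarith [exp_pos (c * s)]
    _ = C / -c := by ring

theorem abs_le_gronwallBound_of_hasDerivAt_linear {d p r : ℝ → ℝ} {K B t : ℝ}
    (hr : Continuous r) (hd : ∀ s, HasDerivAt d (p s * d s + r s) s)
    (hp : ∀ s ∈ Ico 0 t, |p s| ≤ K) (hR : ∀ s ∈ Icc 0 t, |∫ u in 0..s, r u| ≤ B) (ht : 0 ≤ t) :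
    |d t| ≤ gronwallBound |d 0| K (K * B) t + B := by
  set R : ℝ → ℝ := fun s => ∫ u in 0..s, r u
  have hR' : ∀ s, HasDerivAt R (r s) s := fun s => (hr.integral_hasStrictDerivAt 0 s).hasDerivAt
  have hh : ∀ s, HasDerivAt (fun s => d s - R s) (p s * ((d s - R s) + R s)) s := fun s =>
    ((hd s).sub (hR' s)).congr_deriv (by ring)
  have hbound : ∀ s ∈ Ico 0 t,
      ‖p s * ((d s - R s) + R s)‖ ≤ K * ‖d s - R s‖ + K * B := by
    intro s hs
    have hK : 0 ≤ K := (abs_nonneg _).trans (hp s hs)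
    rw [Real.norm_eq_abs, Real.norm_eq_abs, abs_mul]
    calc |p s| * |(d s - R s) + R s| ≤ K * (|d s - R s| + B) :=
          mul_le_mul (hp s hs) ((abs_add_le _ _).trans
            (add_le_add_right (hR s (Ico_subset_Icc_self hs)) _)) (abs_nonneg _) hK
      _ = K * |d s - R s| + K * B := by ring
  have hgron := norm_le_gronwallBound_of_norm_deriv_right_le
    (fun s _ => (hh s).continuousAt.continuousWithinAt) (fun s _ => (hh s).hasDerivWithinAt)
    (by simp [R] : ‖d 0 - R 0‖ ≤ |d 0|) hbound t ⟨ht, le_rfl⟩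
  calc |d t| = |(d t - R t) + R t| := by rw [sub_add_cancel]
    _ ≤ |d t - R t| + |R t| := abs_add_le _ _
    _ ≤ gronwallBound |d 0| K (K * B) t + B :=
      add_le_add (by simpa using hgron) (hR t ⟨ht, le_rfl⟩)

theorem abs_perturbed_field_sub_le {a b e M x : ℝ} (hx : x ∈ Icc (0 : ℝ) 1) (he : |e| ≤ M) :
    |a * (1 - x) * e + b * (1 - x) ^ 2 - (a * e + b)| ≤ (|a| * M + 2 * |b|) * x := by
  have h2x : |2 - x| ≤ 2 := abs_le.2 ⟨by linarith [hx.2], by linarith [hx.1]⟩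
  rw [show a * (1 - x) * e + b * (1 - x) ^ 2 - (a * e + b) = -(x * (a * e + b * (2 - x))) by ring,
    abs_neg, abs_mul, abs_of_nonneg hx.1, mul_comm]
  refine mul_le_mul_of_nonneg_right ?_ hx.1
  calc |a * e + b * (2 - x)| ≤ |a| * |e| + |b| * |2 - x| := by
        rw [← abs_mul, ← abs_mul]; exact abs_add_le _ _
    _ ≤ |a| * M + 2 * |b| := by nlinarith [abs_nonneg a, abs_nonneg b]

theorem abs_sub_le_of_hasDerivAt_exp_perturbation {a b c M t : ℝ} {E ε : ℝ → ℝ}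
    (hc : c < 0) (ht : 0 ≤ t)
    (hE : ∀ s, HasDerivAt E (a * (1 - exp (c * s)) * E s + b * (1 - exp (c * s)) ^ 2) s)
    (hε : ∀ s, HasDerivAt ε (a * ε s + b) s) (hM : ∀ s ∈ Icc 0 t, |ε s| ≤ M) :
    |E t - ε t| ≤ gronwallBound |E 0 - ε 0| |a| (|a| * ((|a| * M + 2 * |b|) / -c)) t
      + (|a| * M + 2 * |b|) / -c := by
  have hεc : Continuous ε := continuous_iff_continuousAt.2 fun s => (hε s).continuousAt
  have hexp_mem : ∀ s, 0 ≤ s → exp (c * s) ∈ Icc (0 : ℝ) 1 := fun s hs =>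
    ⟨(exp_pos _).le, exp_le_one_iff.2 (mul_nonpos_of_nonpos_of_nonneg hc.le hs)⟩
  set r : ℝ → ℝ := fun s =>
    a * (1 - exp (c * s)) * ε s + b * (1 - exp (c * s)) ^ 2 - (a * ε s + b)
  have hr : Continuous r := by fun_prop
  refine abs_le_gronwallBound_of_hasDerivAt_linear (d := fun s => E s - ε s)
    (p := fun s => a * (1 - exp (c * s))) hr (fun s => ((hE s).sub (hε s)).congr_deriv (by ring))
    (fun s hs => ?_) (fun s hs => ?_) ht
  · obtain ⟨h0, h1⟩ := hexp_mem s hs.1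
    rw [abs_mul]
    exact mul_le_of_le_one_right (abs_nonneg a) (abs_le.2 ⟨by linarith, by linarith⟩)
  · exact abs_integral_le_of_abs_le_mul_exp hc hs.1 (hr.intervalIntegrable _ _) fun u hu =>
      abs_perturbed_field_sub_le (hexp_mem u hu.1) (hM u ⟨hu.1, hu.2.trans hs.2⟩)

theorem tendsto_gronwallBound_add {α : Type*} {l : Filter α} {B : α → ℝ} (K t : ℝ)
    (hB : Tendsto B l (𝓝 0)) :
    Tendsto (fun x => gronwallBound 0 K (K * B x) t + B x) l (𝓝 0) := by
  have hcont : Continuous fun ε => gronwallBound 0 K (K * ε) t :=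
    (gronwallBound_continuous_ε 0 K t).comp (continuous_const.mul continuous_id)
  simpa [gronwallBound_ε0_δ0] using ((hcont.tendsto 0).comp hB).add hB

/-- dissipative Wick rotation limit.  For `γ < 0`, let `Ez lam` (for each
`lam ≠ 0`) solve `dẼ_z/dt = 2(Ω²/γ)(1 − e^{(γ/2)(t/λ²)}) Ẽ_z + 2(γ₀Ω²/γ²)(1 − e^{(γ/2)(t/λ²)})²`
with `Ẽ_z(0) = E₀`, and let `ε_z` solve the limit equation
`dε_z/dt = 2(Ω²/γ) ε_z + 2(γ₀Ω²/γ²)` with `ε_z(0) = E₀`.  Then for every fixed `t > 0`,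
`Ẽ_z^λ(t) → ε_z(t)` as `λ → 0`. -/
theorem stmt_16 (γ W γ0 E0 : ℝ) (hγ : γ < 0)
    (Ez : ℝ → ℝ → ℝ)
    (hEz0 : ∀ lam : ℝ, lam ≠ 0 → Ez lam 0 = E0)
    (hEz : ∀ lam : ℝ, lam ≠ 0 → ∀ t, HasDerivAt (Ez lam)
      (2 * (W ^ 2 / γ) * (1 - Real.exp ((γ / 2) * (t / lam ^ 2))) * Ez lam t
        + 2 * (γ0 * W ^ 2 / γ ^ 2) * (1 - Real.exp ((γ / 2) * (t / lam ^ 2))) ^ 2) t)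
    (εz : ℝ → ℝ)
    (hεz0 : εz 0 = E0)
    (hεz : ∀ t, HasDerivAt εz (2 * (W ^ 2 / γ) * εz t + 2 * (γ0 * W ^ 2 / γ ^ 2)) t) :
    ∀ t : ℝ, 0 < t →
      Filter.Tendsto (fun lam => Ez lam t) (nhdsWithin 0 {0}ᶜ) (nhds (εz t)) := by
  intro t ht
  obtain ⟨M, hM⟩ := (isCompact_Icc (a := 0) (b := t)).exists_bound_of_continuousOn
    (continuous_iff_continuousAt.2 fun s => (hεz s).continuousAt).continuousOn
  set C := |2 * (W ^ 2 / γ)| * M + 2 * |2 * (γ0 * W ^ 2 / γ ^ 2)|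
  have hB : Tendsto (fun lam : ℝ => C / -(γ / 2 / lam ^ 2)) (𝓝[≠] 0) (𝓝 0) := by
    have hquad : Tendsto (fun lam : ℝ => 2 * C / -γ * lam ^ 2) (𝓝[≠] 0) (𝓝 0) := by
      have hcont : Continuous fun lam : ℝ => 2 * C / -γ * lam ^ 2 := by fun_prop
      simpa using (hcont.tendsto 0).mono_left nhdsWithin_le_nhds
    refine hquad.congr' ?_
    filter_upwards [self_mem_nhdsWithin] with lam hlam
    field_simp
  refine tendsto_iff_dist_tendsto_zero.2 (squeeze_zero' (Eventually.of_forall fun _ => dist_nonneg)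
    ?_ (tendsto_gronwallBound_add |2 * (W ^ 2 / γ)| t hB))
  filter_upwards [self_mem_nhdsWithin] with lam hlam
  have harg : ∀ s, γ / 2 * (s / lam ^ 2) = γ / 2 / lam ^ 2 * s := fun s => by ring
  have hc : γ / 2 / lam ^ 2 < 0 := div_neg_of_neg_of_pos (by linarith) (sq_pos_of_ne_zero hlam)
  have := abs_sub_le_of_hasDerivAt_exp_perturbation hc ht.le
    (fun s => by simpa only [harg] using hEz lam hlam s) hεz (fun s hs => by simpa using hM s hs)
  rwa [hEz0 lam hlam, hεz0, sub_self, abs_zero, ← Real.dist_eq] at this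
end
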